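/- arXiv:2604.01629 — 2 statements merged into one kernel-verified Lean document; each statement's English description precedes it below -/
import Mathlib

section
/- Let m ≥ 1, α ∈ (0,1), and let (u_i, ũ_i)_{i=1}^m be reals with u_i ≠ ũ_i for all i; form ξ_i, s_i and Q(t) accordingly. Let τ = max{t ∈ {u_1,…,u_m, ũ_1,…,ũ_m} : Q(t) ≤ α} and τ' = max{t ∈ {s_1,…,s_m} : Q(t) ≤ α}, each taken to be −∞ when the corresponding set is empty. Then the two defining sets are simultaneously empty or nonempty, and the resulting selection sets coincide: {i : u_i ≤ min(ũ_i, τ)} = {i : u_i ≤ min(ũ_i, τ')}. -/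
open Finset

/-- Indicator `ξ_i = 1{u_i ≤ ũ_i}` (as a real number). -/
noncomputable def xiv {m : ℕ} (u ut : Fin m → ℝ) (i : Fin m) : ℝ :=
  if u i ≤ ut i then 1 else 0

/-- `s_i = min(u_i, ũ_i)`. -/
noncomputable def sv {m : ℕ} (u ut : Fin m → ℝ) (i : Fin m) : ℝ :=
  min (u i) (ut i)

/-- `Q(t) = (1 + Σ (1 − ξ_i)·1{s_i ≤ t}) / max(Σ ξ_i·1{s_i ≤ t}, 1)`. -/
noncomputable def Qfun {m : ℕ} (u ut : Fin m → ℝ) (t : ℝ) : ℝ :=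
  (1 + ∑ i, (1 - xiv u ut i) * (if sv u ut i ≤ t then 1 else 0)) /
    max (∑ i, xiv u ut i * (if sv u ut i ≤ t then 1 else 0)) 1

/-- The set `{t ∈ {u_1,…,u_m, ũ_1,…,ũ_m} : Q(t) ≤ α}` defining `τ`. -/
noncomputable def thrCand {m : ℕ} (u ut : Fin m → ℝ) (α : ℝ) : Finset ℝ :=
  (Finset.univ.image u ∪ Finset.univ.image ut).filter (fun t => Qfun u ut t ≤ α)

/-- The set `{t ∈ {s_1,…,s_m} : Q(t) ≤ α}` defining `τ'`. -/
noncomputable def thrCandS {m : ℕ} (u ut : Fin m → ℝ) (α : ℝ) : Finset ℝ :=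
  (Finset.univ.image (sv u ut)).filter (fun t => Qfun u ut t ≤ α)

/-- Selection set `{i : u_i ≤ min(ũ_i, τ)}`, empty when `τ = −∞`. -/
noncomputable def selSet {m : ℕ} (u ut : Fin m → ℝ) (α : ℝ) : Finset (Fin m) :=
  if h : (thrCand u ut α).Nonempty then
    Finset.univ.filter (fun i => u i ≤ min (ut i) ((thrCand u ut α).max' h))
  else ∅

/-- Selection set `{i : u_i ≤ min(ũ_i, τ')}`, empty when `τ' = −∞`. -/
noncomputable def selSetS {m : ℕ} (u ut : Fin m → ℝ) (α : ℝ) : Finset (Fin m) :=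
  if h : (thrCandS u ut α).Nonempty then
    Finset.univ.filter (fun i => u i ≤ min (ut i) ((thrCandS u ut α).max' h))
  else ∅

lemma thrCandS_subset {m : ℕ} (u ut : Fin m → ℝ) (α : ℝ) :
    thrCandS u ut α ⊆ thrCand u ut α := by
  intro t ht
  simp only [thrCandS, thrCand, mem_filter, mem_union, mem_image, mem_univ, true_and] at ht ⊢
  refine ⟨?_, ht.2⟩
  obtain ⟨⟨i, hi⟩, _⟩ := ht
  rcases le_total (u i) (ut i) with h | h
  · exact Or.inl ⟨i, by simpa [sv, min_eq_left h] using hi⟩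
  · exact Or.inr ⟨i, by simpa [sv, min_eq_right h] using hi⟩

lemma Qfun_congr {m : ℕ} (u ut : Fin m → ℝ) {t t' : ℝ}
    (h : ∀ i, sv u ut i ≤ t ↔ sv u ut i ≤ t') :
    Qfun u ut t = Qfun u ut t' := by
  unfold Qfun
  have e1 : ∀ i ∈ (univ : Finset (Fin m)), (1 - xiv u ut i) * (if sv u ut i ≤ t then 1 else 0)
      = (1 - xiv u ut i) * (if sv u ut i ≤ t' then 1 else 0) := fun i _ => by
    rw [if_congr (h i) rfl rfl]
  have e2 : ∀ i ∈ (univ : Finset (Fin m)), xiv u ut i * (if sv u ut i ≤ t then 1 else 0)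
      = xiv u ut i * (if sv u ut i ≤ t' then 1 else 0) := fun i _ => by
    rw [if_congr (h i) rfl rfl]
  rw [Finset.sum_congr rfl e1, Finset.sum_congr rfl e2]

theorem stmt18' {m : ℕ} (hm : 1 ≤ m) (α : ℝ) (hα : α ∈ Set.Ioo (0 : ℝ) 1)
    (u ut : Fin m → ℝ) (hne : ∀ i, u i ≠ ut i) :
    ((thrCand u ut α).Nonempty ↔ (thrCandS u ut α).Nonempty) ∧
      selSet u ut α = selSetS u ut α := by
  by_cases h : (thrCand u ut α).Nonempty
  · -- τ
    set τ := (thrCand u ut α).max' h with hτ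
    have hτmem : τ ∈ thrCand u ut α := (thrCand u ut α).max'_mem h
    have hQτ : Qfun u ut τ ≤ α := (mem_filter.1 hτmem).2
    -- some s_j ≤ τ
    have hex : ∃ j, sv u ut j ≤ τ := by
      by_contra hno
      push_neg at hno
      have : Qfun u ut τ = 1 := by
        unfold Qfun
        have h1 : ∀ i ∈ (univ : Finset (Fin m)),
            (1 - xiv u ut i) * (if sv u ut i ≤ τ then 1 else 0) = 0 := by
          intro i _; simp [not_le.2 (hno i), le_of_lt]
        have h2 : ∀ i ∈ (univ : Finset (Fin m)),
            xiv u ut i * (if sv u ut i ≤ τ then 1 else 0) = 0 := by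
          intro i _; simp [not_le.2 (hno i), le_of_lt]
        rw [Finset.sum_congr rfl h1, Finset.sum_congr rfl h2]
        simp
      linarith [hα.2]
    -- t' = largest s_i ≤ τ
    set T : Finset ℝ := (Finset.univ.image (sv u ut)).filter (fun t => t ≤ τ) with hT
    have hTne : T.Nonempty := by
      obtain ⟨j, hj⟩ := hex
      exact ⟨sv u ut j, by simp [hT, mem_filter, hj]⟩
    set t' := T.max' hTne with ht'
    have ht'mem := T.max'_mem hTne
    have ht'leτ : t' ≤ τ := (mem_filter.1 ht'mem).2
    have hkey : ∀ i, sv u ut i ≤ τ ↔ sv u ut i ≤ t' := by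
      intro i
      constructor
      · intro hi
        exact T.le_max' _ (by simp [hT, mem_filter, hi])
      · intro hi; exact hi.trans ht'leτ
    have hQt' : Qfun u ut t' = Qfun u ut τ := (Qfun_congr u ut fun i => (hkey i).symm)
    have ht'S : t' ∈ thrCandS u ut α := by
      obtain ⟨j, hj⟩ : ∃ j, sv u ut j = t' := by
        have := (mem_filter.1 ht'mem).1
        simpa [mem_image] using this
      exact mem_filter.2 ⟨mem_image.2 ⟨j, mem_univ j, hj⟩, by rw [hQt']; exact hQτ⟩
    have hS : (thrCandS u ut α).Nonempty := ⟨t', ht'S⟩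
    set τ' := (thrCandS u ut α).max' hS with hτ'
    have hτ'leτ : τ' ≤ τ :=
      (thrCand u ut α).le_max' _ (thrCandS_subset u ut α ((thrCandS u ut α).max'_mem hS))
    have ht'leτ' : t' ≤ τ' := (thrCandS u ut α).le_max' _ ht'S
    have hiff : ∀ i, sv u ut i ≤ τ ↔ sv u ut i ≤ τ' := by
      intro i
      exact ⟨fun hi => ((hkey i).1 hi).trans ht'leτ', fun hi => hi.trans hτ'leτ⟩
    refine ⟨⟨fun _ => hS, fun _ => h⟩, ?_⟩
    rw [selSet, selSetS, dif_pos h, dif_pos hS]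
    apply Finset.filter_congr
    intro i _
    simp only [le_min_iff, ← hτ, ← hτ']
    constructor
    · rintro ⟨h1, h2⟩
      refine ⟨h1, ?_⟩
      have hs : sv u ut i = u i := min_eq_left h1
      have := (hiff i).1 (by rw [hs]; exact h2)
      rwa [hs] at this
    · rintro ⟨h1, h2⟩
      refine ⟨h1, ?_⟩
      have hm1 : sv u ut i = u i := min_eq_left h1
      have := (hiff i).2 (by rw [hm1]; exact h2)
      rwa [hm1] at this
  · have hS : ¬ (thrCandS u ut α).Nonempty := by
      intro hS
      exact h ⟨_, thrCandS_subset u ut α ((thrCandS u ut α).max'_mem hS)⟩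
    refine ⟨⟨fun h' => absurd h' h, fun h' => absurd h' hS⟩, ?_⟩
    rw [selSet, selSetS, dif_neg h, dif_neg hS]

/-- restricting the threshold search from `{u_i} ∪ {ũ_i}` to `{s_i}`
changes neither emptiness of the defining set nor the resulting selection set. -/
theorem stmt18 {m : ℕ} (hm : 1 ≤ m) (α : ℝ) (hα : α ∈ Set.Ioo (0 : ℝ) 1)
    (u ut : Fin m → ℝ) (hne : ∀ i, u i ≠ ut i) :
    ((thrCand u ut α).Nonempty ↔ (thrCandS u ut α).Nonempty) ∧
      selSet u ut α = selSetS u ut α := by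
  exact stmt18' hm α hα u ut hne
end

section
/- Let H be a finite index set, H₀ ⊆ H, α > 0, and let ξ_i ∈ {0,1} and s_i ∈ ℝ for i ∈ H. Suppose t ∈ ℝ satisfies (1 + Σ_{i∈H} (1 − ξ_i)·1{s_i ≤ t}) / max(Σ_{i∈H} ξ_i·1{s_i ≤ t}, 1) ≤ α. Then the false discovery proportion admits the bound: Σ_{i∈H₀} ξ_i·1{s_i ≤ t} / max(Σ_{i∈H} ξ_i·1{s_i ≤ t}, 1) ≤ α · Σ_{i∈H₀} ξ_i·1{s_i ≤ t} / (1 + Σ_{i∈H₀} (1 − ξ_i)·1{s_i ≤ t}). -/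
open Finset

/-- deterministic FDP bound. If the empirical FDP estimate at threshold `t`
is at most `α`, then the true FDP at `t` is bounded by
`α·Σ_{H₀} ξ_i·1{s_i ≤ t} / (1 + Σ_{H₀} (1 − ξ_i)·1{s_i ≤ t})`. -/
theorem stmt19 {ι : Type*} [DecidableEq ι] (H H0 : Finset ι) (hsub : H0 ⊆ H)
    (α : ℝ) (hα : 0 < α) (ξ : ι → ℝ) (hξ : ∀ i, ξ i = 0 ∨ ξ i = 1)
    (s : ι → ℝ) (t : ℝ)
    (ht : (1 + ∑ i ∈ H, (1 - ξ i) * (if s i ≤ t then 1 else 0)) /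
        max (∑ i ∈ H, ξ i * (if s i ≤ t then 1 else 0)) 1 ≤ α) :
    (∑ i ∈ H0, ξ i * (if s i ≤ t then 1 else 0)) /
        max (∑ i ∈ H, ξ i * (if s i ≤ t then 1 else 0)) 1
      ≤ α * (∑ i ∈ H0, ξ i * (if s i ≤ t then 1 else 0)) /
          (1 + ∑ i ∈ H0, (1 - ξ i) * (if s i ≤ t then 1 else 0)) := by
  set V := ∑ i ∈ H0, ξ i * (if s i ≤ t then 1 else 0) with hVdef
  set A0 := ∑ i ∈ H0, (1 - ξ i) * (if s i ≤ t then 1 else 0) with hA0def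
  set A := ∑ i ∈ H, (1 - ξ i) * (if s i ≤ t then 1 else 0) with hAdef
  set D := max (∑ i ∈ H, ξ i * (if s i ≤ t then 1 else 0)) 1 with hDdef
  have hterm : ∀ i, 0 ≤ ξ i * (if s i ≤ t then 1 else 0) := by
    intro i
    rcases hξ i with h | h <;> rw [h] <;> positivity
  have hterm' : ∀ i, 0 ≤ (1 - ξ i) * (if s i ≤ t then 1 else 0) := by
    intro i
    rcases hξ i with h | h <;> rw [h] <;> positivity
  have hV : 0 ≤ V := Finset.sum_nonneg fun i _ => hterm i
  have hA0 : 0 ≤ A0 := Finset.sum_nonneg fun i _ => hterm' i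
  have hA0A : A0 ≤ A :=
    Finset.sum_le_sum_of_subset_of_nonneg hsub fun i _ _ => hterm' i
  have hD : (0 : ℝ) < D := lt_of_lt_of_le one_pos (le_max_right _ _)
  have h1A0 : (0 : ℝ) < 1 + A0 := by linarith
  have hAD : 1 + A ≤ α * D := (div_le_iff₀ hD).mp ht
  rw [div_le_div_iff₀ hD h1A0]
  nlinarith [mul_le_mul_of_nonneg_left hAD hV, mul_le_mul_of_nonneg_left hA0A hV]
end
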